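/- Let s > 1/2 and σ ≥ 0 be real numbers. Then there exists a constant C > 0, depending only on s, such that for all measurable functions g, h : ℝ → ℂ one has ∫_ℝ e^{2σ|ξ|}(1+ξ²)^s |∫_ℝ g(ξ−η)h(η) dη|² dξ ≤ C² · (∫_ℝ e^{2σ|ξ|}(1+ξ²)^s |g(ξ)|² dξ) · (∫_ℝ e^{2σ|ξ|}(1+ξ²)^s |h(ξ)|² dξ), provided both factors on the right-hand side are finite (all integrals are Lebesgue integrals with values in [0,∞], the inner convolution integral being interpreted as 0 when the integrand is not integrable). -/

import Mathlib

open MeasureTheory Real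
open scoped ENNReal

/-!
Put `w(ξ) = e^{σ|ξ|} (1 + ξ²)^{s/2}` and `e(ξ) = e^{σ|ξ|}`, so that `N_{σ,s}(g) = ‖w g‖₂²`.
Since `|ξ| ≤ |ξ - η| + |η|` and `1 + ξ² ≤ 4 max (1 + (ξ - η)², 1 + η²)`, the weight satisfies
`w(ξ) ≤ 2^s (w(ξ - η) e(η) + e(ξ - η) w(η))`, hence `w |g ⋆ h| ≤ 2^s (|w g| ⋆ |e h| + |e g| ⋆ |w h|)`.
Young's inequality `‖u ⋆ v‖₂ ≤ ‖u‖₁ ‖v‖₂` bounds both terms, and Cauchy–Schwarz gives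
`‖e g‖₁ ≤ ‖(1 + ξ²)^{-s/2}‖₂ ‖w g‖₂`, where the first factor is finite because `s > 1/2`.
-/

theorem ENNReal.add_sq_le (a b : ℝ≥0∞) : (a + b) ^ 2 ≤ 2 * (a ^ 2 + b ^ 2) := by
  have := ENNReal.rpow_add_le_mul_rpow_add_rpow a b one_le_two
  rwa [show (2 : ℝ) - 1 = 1 by norm_num, ENNReal.rpow_one, ENNReal.rpow_two, ENNReal.rpow_two,
    ENNReal.rpow_two] at this

section CauchySchwarz

variable {α : Type*} [MeasurableSpace α] {μ : Measure α}

theorem sq_lintegral_mul_le {u v : α → ℝ≥0∞} (hu : AEMeasurable u μ) (hv : AEMeasurable v μ) :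
    (∫⁻ x, u x * v x ∂μ) ^ 2 ≤ (∫⁻ x, u x ^ 2 ∂μ) * ∫⁻ x, v x ^ 2 ∂μ := by
  have h := ENNReal.lintegral_mul_le_Lp_mul_Lq μ Real.HolderConjugate.two_two hu hv
  calc (∫⁻ x, u x * v x ∂μ) ^ 2
      ≤ ((∫⁻ x, u x ^ (2 : ℝ) ∂μ) ^ (1 / 2 : ℝ) * (∫⁻ x, v x ^ (2 : ℝ) ∂μ) ^ (1 / 2 : ℝ)) ^ 2 :=
        pow_le_pow_left' h 2
    _ = (∫⁻ x, u x ^ 2 ∂μ) * ∫⁻ x, v x ^ 2 ∂μ := by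
        simp only [mul_pow, ← ENNReal.rpow_natCast, ← ENNReal.rpow_mul]
        norm_num

/-- Cauchy–Schwarz with respect to the measure `f ∂μ`. -/
theorem sq_lintegral_mul_le_lintegral_mul_lintegral_mul_sq {f k : α → ℝ≥0∞}
    (hf : AEMeasurable f μ) (hk : AEMeasurable k μ) :
    (∫⁻ x, f x * k x ∂μ) ^ 2 ≤ (∫⁻ x, f x ∂μ) * ∫⁻ x, f x * k x ^ 2 ∂μ := by
  have hsq : ∀ a : ℝ≥0∞, (a ^ (1 / 2 : ℝ)) ^ 2 = a := fun a => by
    rw [← ENNReal.rpow_natCast, ← ENNReal.rpow_mul]; norm_num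
  have hf' : AEMeasurable (fun x => f x ^ (1 / 2 : ℝ)) μ := hf.pow_const _
  calc (∫⁻ x, f x * k x ∂μ) ^ 2
      = (∫⁻ x, f x ^ (1 / 2 : ℝ) * (f x ^ (1 / 2 : ℝ) * k x) ∂μ) ^ 2 := by
        simp_rw [← mul_assoc, ← sq, hsq]
    _ ≤ (∫⁻ x, (f x ^ (1 / 2 : ℝ)) ^ 2 ∂μ) * ∫⁻ x, (f x ^ (1 / 2 : ℝ) * k x) ^ 2 ∂μ :=
        sq_lintegral_mul_le hf' (hf'.mul hk)
    _ = (∫⁻ x, f x ∂μ) * ∫⁻ x, f x * k x ^ 2 ∂μ := by simp_rw [mul_pow, hsq]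

end CauchySchwarz

section Young

variable {G : Type*} [MeasurableSpace G] [AddGroup G] [MeasurableAdd₂ G] [MeasurableNeg G]
  {μ : Measure G}

theorem lintegral_lconvolution_sq_le [SFinite μ] [μ.IsAddLeftInvariant] {f g : G → ℝ≥0∞}
    (hf : Measurable f) (hg : Measurable g) :
    ∫⁻ x, (f ⋆ₗ[μ] g) x ^ 2 ∂μ ≤ (∫⁻ x, f x ∂μ) ^ 2 * ∫⁻ x, g x ^ 2 ∂μ := by
  calc ∫⁻ x, (f ⋆ₗ[μ] g) x ^ 2 ∂μ
      ≤ ∫⁻ x, (∫⁻ y, f y ∂μ) * ∫⁻ y, f y * g (-y + x) ^ 2 ∂μ ∂μ :=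
        lintegral_mono fun x => sq_lintegral_mul_le_lintegral_mul_lintegral_mul_sq
          hf.aemeasurable (by fun_prop)
    _ = (∫⁻ y, f y ∂μ) * ∫⁻ y, f y * ∫⁻ x, g (-y + x) ^ 2 ∂μ ∂μ := by
        rw [lintegral_const_mul _ (by fun_prop), lintegral_lintegral_swap (by fun_prop)]
        congr 1
        refine lintegral_congr fun y => lintegral_const_mul _ (by fun_prop)
    _ = (∫⁻ x, f x ∂μ) ^ 2 * ∫⁻ x, g x ^ 2 ∂μ := by
        simp_rw [lintegral_add_left_eq_self (fun x => g x ^ 2), lintegral_mul_const _ hf]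
        ring

theorem mul_lconvolution_le {w e f g : G → ℝ≥0∞} {c : ℝ≥0∞}
    (hw : ∀ x y, w (x + y) ≤ c * (w x * e y + e x * w y))
    (hwm : Measurable w) (hem : Measurable e) (hf : Measurable f) (hg : Measurable g) (x : G) :
    w x * (f ⋆ₗ[μ] g) x ≤ c * (((w * f) ⋆ₗ[μ] (e * g)) x + ((e * f) ⋆ₗ[μ] (w * g)) x) := by
  calc w x * (f ⋆ₗ[μ] g) x ≤ ∫⁻ y, w x * (f y * g (-y + x)) ∂μ := lintegral_const_mul_le _ _
    _ ≤ ∫⁻ y, c * ((w * f) y * (e * g) (-y + x) + (e * f) y * (w * g) (-y + x)) ∂μ := by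
        refine lintegral_mono fun y => ?_
        have hxy := hw y (-y + x)
        rw [add_neg_cancel_left] at hxy
        calc w x * (f y * g (-y + x))
            ≤ c * (w y * e (-y + x) + e y * w (-y + x)) * (f y * g (-y + x)) := by gcongr
          _ = _ := by simp only [Pi.mul_apply]; ring
    _ = c * (((w * f) ⋆ₗ[μ] (e * g)) x + ((e * f) ⋆ₗ[μ] (w * g)) x) := by
        rw [lintegral_const_mul _ (by fun_prop), lintegral_add_left (by fun_prop)]
        rfl

end Young

theorem enorm_integral_mul_le_lconvolution {G 𝕜 : Type*} [MeasurableSpace G] [AddCommGroup G]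
    [RCLike 𝕜] {μ : Measure G} (f g : G → 𝕜) (x : G) :
    ‖∫ y, f (x - y) * g y ∂μ‖ₑ ≤ ((fun y => ‖g y‖ₑ) ⋆ₗ[μ] fun y => ‖f y‖ₑ) x :=
  (enorm_integral_le_lintegral_enorm _).trans_eq <| by
    simp only [lconvolution_def, enorm_mul, mul_comm, sub_eq_neg_add]

section WeightedYoung

variable {G : Type*} [MeasurableSpace G] [AddCommGroup G] [MeasurableAdd₂ G] [MeasurableNeg G]
  {μ : Measure G} [SFinite μ] [μ.IsAddLeftInvariant] [μ.IsNegInvariant]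

theorem lintegral_mul_lconvolution_sq_le {w e q f g : G → ℝ≥0∞} {c : ℝ≥0∞}
    (hw : ∀ x y, w (x + y) ≤ c * (w x * e y + e x * w y)) (he : ∀ x, e x ≤ q x * w x)
    (hwm : Measurable w) (hem : Measurable e) (hqm : Measurable q)
    (hf : Measurable f) (hg : Measurable g) :
    ∫⁻ x, (w x * (f ⋆ₗ[μ] g) x) ^ 2 ∂μ ≤
      4 * c ^ 2 * (∫⁻ x, q x ^ 2 ∂μ) * (∫⁻ x, (w x * f x) ^ 2 ∂μ) * ∫⁻ x, (w x * g x) ^ 2 ∂μ := by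
  set Q := ∫⁻ x, q x ^ 2 ∂μ
  have hL1 : ∀ u : G → ℝ≥0∞, Measurable u →
      (∫⁻ x, e x * u x ∂μ) ^ 2 ≤ Q * ∫⁻ x, (w x * u x) ^ 2 ∂μ := fun u hu =>
    calc (∫⁻ x, e x * u x ∂μ) ^ 2 ≤ (∫⁻ x, q x * (w x * u x) ∂μ) ^ 2 := by
          refine pow_le_pow_left' (lintegral_mono fun x => ?_) 2
          grw [he x, mul_assoc]
      _ ≤ Q * ∫⁻ x, (w x * u x) ^ 2 ∂μ :=
          sq_lintegral_mul_le hqm.aemeasurable (hwm.mul hu).aemeasurable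
  set A := (w * f) ⋆ₗ[μ] (e * g)
  set B := (e * f) ⋆ₗ[μ] (w * g)
  have hA : ∫⁻ x, A x ^ 2 ∂μ ≤ Q * (∫⁻ x, (w x * f x) ^ 2 ∂μ) * ∫⁻ x, (w x * g x) ^ 2 ∂μ :=
    calc ∫⁻ x, A x ^ 2 ∂μ = ∫⁻ x, ((e * g) ⋆ₗ[μ] (w * f)) x ^ 2 ∂μ := by rw [lconvolution_comm]
      _ ≤ (∫⁻ x, e x * g x ∂μ) ^ 2 * ∫⁻ x, (w x * f x) ^ 2 ∂μ :=
          lintegral_lconvolution_sq_le (hem.mul hg) (hwm.mul hf)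
      _ ≤ Q * (∫⁻ x, (w x * g x) ^ 2 ∂μ) * ∫⁻ x, (w x * f x) ^ 2 ∂μ := by grw [hL1 g hg]
      _ = _ := by ring
  have hB : ∫⁻ x, B x ^ 2 ∂μ ≤ Q * (∫⁻ x, (w x * f x) ^ 2 ∂μ) * ∫⁻ x, (w x * g x) ^ 2 ∂μ :=
    calc ∫⁻ x, B x ^ 2 ∂μ ≤ (∫⁻ x, e x * f x ∂μ) ^ 2 * ∫⁻ x, (w x * g x) ^ 2 ∂μ :=
          lintegral_lconvolution_sq_le (hem.mul hf) (hwm.mul hg)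
      _ ≤ _ := by grw [hL1 f hf]
  calc ∫⁻ x, (w x * (f ⋆ₗ[μ] g) x) ^ 2 ∂μ ≤ ∫⁻ x, (c * (A x + B x)) ^ 2 ∂μ :=
        lintegral_mono fun x => pow_le_pow_left' (mul_lconvolution_le hw hwm hem hf hg x) 2
    _ ≤ ∫⁻ x, c ^ 2 * (2 * (A x ^ 2 + B x ^ 2)) ∂μ := by
        gcongr with x; rw [mul_pow]; gcongr; exact ENNReal.add_sq_le _ _
    _ = 2 * c ^ 2 * (∫⁻ x, A x ^ 2 ∂μ + ∫⁻ x, B x ^ 2 ∂μ) := by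
        have hAm : Measurable A := measurable_lconvolution μ (hwm.mul hf) (hem.mul hg)
        rw [lintegral_const_mul _ (by fun_prop), lintegral_const_mul _ (by fun_prop),
          lintegral_add_left (by fun_prop)]
        ring
    _ ≤ 2 * c ^ 2 * (Q * (∫⁻ x, (w x * f x) ^ 2 ∂μ) * ∫⁻ x, (w x * g x) ^ 2 ∂μ +
          Q * (∫⁻ x, (w x * f x) ^ 2 ∂μ) * ∫⁻ x, (w x * g x) ^ 2 ∂μ) := by grw [hA, hB]
    _ = _ := by ring

end WeightedYoung

theorem one_add_sq_add_rpow_le {t : ℝ} (ht : 0 ≤ t) (x y : ℝ) :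
    (1 + (x + y) ^ 2) ^ t ≤ 4 ^ t * ((1 + x ^ 2) ^ t + (1 + y ^ 2) ^ t) := by
  set m := max (1 + x ^ 2) (1 + y ^ 2)
  calc (1 + (x + y) ^ 2) ^ t ≤ (4 * m) ^ t := by
        gcongr
        nlinarith [le_max_left (1 + x ^ 2) (1 + y ^ 2), le_max_right (1 + x ^ 2) (1 + y ^ 2),
          sq_nonneg (x - y)]
    _ = 4 ^ t * m ^ t := mul_rpow (by norm_num) (by positivity)
    _ ≤ 4 ^ t * ((1 + x ^ 2) ^ t + (1 + y ^ 2) ^ t) := by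
        gcongr
        rcases max_choice (1 + x ^ 2) (1 + y ^ 2) with h | h <;>
          simp only [m, h, le_add_iff_nonneg_right, le_add_iff_nonneg_left] <;> positivity

noncomputable def gevreyWeight (σ s ξ : ℝ) : ℝ := exp (σ * |ξ|) * (1 + ξ ^ 2) ^ (s / 2)

theorem gevreyWeight_nonneg (σ s ξ : ℝ) : 0 ≤ gevreyWeight σ s ξ := by
  unfold gevreyWeight; positivity

@[fun_prop]
theorem measurable_gevreyWeight (σ s : ℝ) : Measurable (gevreyWeight σ s) := by
  unfold gevreyWeight; fun_prop

theorem gevreyWeight_add_le {σ s : ℝ} (hσ : 0 ≤ σ) (hs : 0 ≤ s) (x y : ℝ) :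
    gevreyWeight σ s (x + y) ≤
      4 ^ (s / 2) * (gevreyWeight σ s x * exp (σ * |y|) + exp (σ * |x|) * gevreyWeight σ s y) := by
  have hexp : exp (σ * |x + y|) ≤ exp (σ * |x|) * exp (σ * |y|) := by
    rw [← exp_add, ← mul_add]; gcongr; exact abs_add_le x y
  calc gevreyWeight σ s (x + y)
      ≤ (exp (σ * |x|) * exp (σ * |y|)) *
          (4 ^ (s / 2) * ((1 + x ^ 2) ^ (s / 2) + (1 + y ^ 2) ^ (s / 2))) := by
        unfold gevreyWeight
        gcongr
        exact one_add_sq_add_rpow_le (by positivity) x y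
    _ = _ := by unfold gevreyWeight; ring

theorem exp_mul_abs_eq_rpow_neg_mul_gevreyWeight (σ s ξ : ℝ) :
    exp (σ * |ξ|) = (1 + ξ ^ 2) ^ (-(s / 2)) * gevreyWeight σ s ξ := by
  rw [gevreyWeight, mul_left_comm, ← rpow_add (by positivity), neg_add_cancel, rpow_zero, mul_one]

theorem gevreyWeight_sq (σ s ξ : ℝ) :
    gevreyWeight σ s ξ ^ 2 = exp (2 * σ * |ξ|) * (1 + ξ ^ 2) ^ s := by
  rw [gevreyWeight, mul_pow, ← exp_nat_mul, ← rpow_mul_natCast (by positivity)]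
  push_cast
  ring_nf

theorem ofReal_gevreyWeight_add_le {σ s : ℝ} (hσ : 0 ≤ σ) (hs : 0 ≤ s) (x y : ℝ) :
    ENNReal.ofReal (gevreyWeight σ s (x + y)) ≤ ENNReal.ofReal (4 ^ (s / 2)) *
      (ENNReal.ofReal (gevreyWeight σ s x) * ENNReal.ofReal (exp (σ * |y|)) +
        ENNReal.ofReal (exp (σ * |x|)) * ENNReal.ofReal (gevreyWeight σ s y)) := by
  have hw := gevreyWeight_nonneg σ s
  rw [← ENNReal.ofReal_mul (hw x), ← ENNReal.ofReal_mul (exp_nonneg _),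
    ← ENNReal.ofReal_add (mul_nonneg (hw x) (exp_nonneg _)) (mul_nonneg (exp_nonneg _) (hw y)),
    ← ENNReal.ofReal_mul (by positivity)]
  exact ENNReal.ofReal_le_ofReal (gevreyWeight_add_le hσ hs x y)

theorem ofReal_exp_mul_rpow_mul_norm_sq {E : Type*} [SeminormedAddGroup E] (σ s ξ : ℝ) (z : E) :
    ENNReal.ofReal (exp (2 * σ * |ξ|) * (1 + ξ ^ 2) ^ s * ‖z‖ ^ 2) =
      (ENNReal.ofReal (gevreyWeight σ s ξ) * ‖z‖ₑ) ^ 2 := by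
  rw [← gevreyWeight_sq, ← ofReal_norm, ← ENNReal.ofReal_mul (gevreyWeight_nonneg σ s ξ),
    ← ENNReal.ofReal_pow (mul_nonneg (gevreyWeight_nonneg σ s ξ) (norm_nonneg z)), mul_pow]

theorem integrable_one_add_sq_rpow_neg {s : ℝ} (hs : 1 / 2 < s) :
    Integrable fun ξ : ℝ => (1 + ξ ^ 2) ^ (-s) := by
  have := integrable_rpow_neg_one_add_norm_sq (E := ℝ) (μ := volume) (r := 2 * s)
    (by simp; linarith)
  convert this using 2 with ξ
  rw [norm_eq_abs, sq_abs]; ring_nf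

theorem integral_one_add_sq_rpow_neg_pos {s : ℝ} (hs : 1 / 2 < s) :
    0 < ∫ ξ : ℝ, (1 + ξ ^ 2) ^ (-s) := by
  rw [integral_pos_iff_support_of_nonneg (fun ξ => by positivity)
    (integrable_one_add_sq_rpow_neg hs)]
  have hne : ∀ ξ : ℝ, (1 + ξ ^ 2) ^ (-s) ≠ 0 := fun ξ => (rpow_pos_of_pos (by positivity) _).ne'
  simp [Function.support, hne]

theorem lintegral_sq_ofReal_one_add_sq_rpow_neg_half {s : ℝ} (hs : 1 / 2 < s) :
    ∫⁻ ξ : ℝ, ENNReal.ofReal ((1 + ξ ^ 2) ^ (-(s / 2))) ^ 2 =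
      ENNReal.ofReal (∫ ξ : ℝ, (1 + ξ ^ 2) ^ (-s)) := by
  rw [ofReal_integral_eq_lintegral_ofReal (integrable_one_add_sq_rpow_neg hs)
    (ae_of_all _ fun ξ => by positivity)]
  refine lintegral_congr fun ξ => ?_
  rw [← ENNReal.ofReal_pow (by positivity), ← rpow_mul_natCast (by positivity)]
  ring_nf

/-- Fourier-side algebra property of the Gevrey spaces `G^{σ,s}(ℝ)` for `s > 1/2`:
there is `C > 0`, depending only on `s`, such that for every `σ ≥ 0` and all
measurable `g h : ℝ → ℂ` with finite Gevrey-type weighted integrals,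
`N_{σ,s}(g ⋆ h) ≤ C² N_{σ,s}(g) N_{σ,s}(h)`. -/
theorem gevrey_algebra (s : ℝ) (hs : 1 / 2 < s) :
    ∃ C : ℝ, 0 < C ∧ ∀ σ : ℝ, 0 ≤ σ → ∀ g h : ℝ → ℂ, Measurable g → Measurable h →
      (∫⁻ ξ : ℝ, ENNReal.ofReal
          (Real.exp (2 * σ * |ξ|) * (1 + ξ ^ 2) ^ s * ‖g ξ‖ ^ 2)) ≠ ⊤ →
      (∫⁻ ξ : ℝ, ENNReal.ofReal
          (Real.exp (2 * σ * |ξ|) * (1 + ξ ^ 2) ^ s * ‖h ξ‖ ^ 2)) ≠ ⊤ →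
      (∫⁻ ξ : ℝ, ENNReal.ofReal
          (Real.exp (2 * σ * |ξ|) * (1 + ξ ^ 2) ^ s *
            ‖∫ η : ℝ, g (ξ - η) * h η‖ ^ 2)) ≤
        ENNReal.ofReal (C ^ 2) *
          (∫⁻ ξ : ℝ, ENNReal.ofReal
            (Real.exp (2 * σ * |ξ|) * (1 + ξ ^ 2) ^ s * ‖g ξ‖ ^ 2)) *
          (∫⁻ ξ : ℝ, ENNReal.ofReal
            (Real.exp (2 * σ * |ξ|) * (1 + ξ ^ 2) ^ s * ‖h ξ‖ ^ 2)) := by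
  set K := ∫ ξ : ℝ, (1 + ξ ^ 2) ^ (-s)
  have hK : 0 < K := integral_one_add_sq_rpow_neg_pos hs
  have hs0 : 0 ≤ s := by linarith
  refine ⟨2 * 4 ^ (s / 2) * √K, by positivity, fun σ hσ g h hg hh _ _ => ?_⟩
  simp only [ofReal_exp_mul_rpow_mul_norm_sq]
  calc ∫⁻ ξ, (ENNReal.ofReal (gevreyWeight σ s ξ) * ‖∫ η, g (ξ - η) * h η‖ₑ) ^ 2
      ≤ ∫⁻ ξ, (ENNReal.ofReal (gevreyWeight σ s ξ) *
          ((fun η => ‖h η‖ₑ) ⋆ₗ fun η => ‖g η‖ₑ) ξ) ^ 2 := by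
        gcongr with ξ; exact enorm_integral_mul_le_lconvolution g h ξ
    _ ≤ 4 * ENNReal.ofReal (4 ^ (s / 2)) ^ 2 * ENNReal.ofReal K *
          (∫⁻ ξ, (ENNReal.ofReal (gevreyWeight σ s ξ) * ‖h ξ‖ₑ) ^ 2) *
          ∫⁻ ξ, (ENNReal.ofReal (gevreyWeight σ s ξ) * ‖g ξ‖ₑ) ^ 2 := by
        rw [← lintegral_sq_ofReal_one_add_sq_rpow_neg_half hs]
        refine lintegral_mul_lconvolution_sq_le (ofReal_gevreyWeight_add_le hσ hs0) (fun ξ => ?_)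
          (by fun_prop) (by fun_prop) (by fun_prop) hh.enorm hg.enorm
        rw [exp_mul_abs_eq_rpow_neg_mul_gevreyWeight σ s, ENNReal.ofReal_mul (by positivity)]
    _ = _ := by
        rw [mul_pow, mul_pow, sq_sqrt hK.le, ENNReal.ofReal_mul (by positivity),
          ENNReal.ofReal_mul (by positivity), ENNReal.ofReal_pow (by positivity),
          ENNReal.ofReal_pow (by positivity)]
        norm_num
        ring
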